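/- Under the hypotheses of the previous statement, and assuming additionally ⟨V_n, W⟩ = η_{n+1} is a nonzero constant with η_{n+1} = H_{n+1} η_2, one has H_{n+1}^2/η_{n+1}^2 − 2 H_1 H_{n+2} = Σ_{i=1}^{n} H_{i+1}^2. -/
import Mathlib


open scoped BigOperators

/-- The Minkowski bilinear form of signature (n+1,1) on ℝ^{n+2}. -/
def mink (n : ℕ) (u v : Fin (n+2) → ℝ) : ℝ :=
  (∑ i : Fin (n+1), u i.castSucc * v i.castSucc) - u (Fin.last (n+1)) * v (Fin.last (n+1))

lemma mink_comm (n : ℕ) (u v : Fin (n+2) → ℝ) : mink n u v = mink n v u := by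
  simp [mink, mul_comm]

lemma mink_add_left (n : ℕ) (u v w : Fin (n+2) → ℝ) :
    mink n (u + v) w = mink n u w + mink n v w := by
  simp [mink, add_mul, Finset.sum_add_distrib]; ring

lemma mink_smul_left (n : ℕ) (c : ℝ) (u w : Fin (n+2) → ℝ) :
    mink n (c • u) w = c * mink n u w := by
  simp only [mink, Pi.smul_apply, smul_eq_mul]
  rw [mul_sub, Finset.mul_sum]
  ring_nf

lemma mink_zero_left (n : ℕ) (w : Fin (n+2) → ℝ) : mink n 0 w = 0 := by
  simp [mink]

lemma mink_sum_left {ι : Type*} (n : ℕ) (s : Finset ι) (f : ι → Fin (n+2) → ℝ)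
    (w : Fin (n+2) → ℝ) :
    mink n (∑ i ∈ s, f i) w = ∑ i ∈ s, mink n (f i) w := by
  induction s using Finset.cons_induction with
  | empty => simp [mink_zero_left]
  | cons a s ha ih => rw [Finset.sum_cons, mink_add_left, ih, Finset.sum_cons]

lemma mink_add_right (n : ℕ) (u v w : Fin (n+2) → ℝ) :
    mink n w (u + v) = mink n w u + mink n w v := by
  rw [mink_comm, mink_add_left, mink_comm n u, mink_comm n v]

lemma mink_smul_right (n : ℕ) (c : ℝ) (u w : Fin (n+2) → ℝ) :
    mink n w (c • u) = c * mink n w u := by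
  rw [mink_comm, mink_smul_left, mink_comm]

lemma mink_sum_right {ι : Type*} (n : ℕ) (s : Finset ι) (f : ι → Fin (n+2) → ℝ)
    (w : Fin (n+2) → ℝ) :
    mink n w (∑ i ∈ s, f i) = ∑ i ∈ s, mink n w (f i) := by
  rw [mink_comm, mink_sum_left]
  exact Finset.sum_congr rfl fun i _ => mink_comm n (f i) w

/-- Under the same hypotheses, with in addition η_{n+1} = ⟨V_n,W⟩ = H_{n+1} η₂ a nonzero
constant, H_{n+1}²/η_{n+1}² − 2 H₁ H_{n+2} = Σ_{i=1}^n H_{i+1}². -/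
theorem stmt11 (n : ℕ) (W x y : Fin (n + 2) → ℝ) (V : ℕ → Fin (n + 2) → ℝ)
    (η H : ℕ → ℝ)
    (hxx : mink n x x = 0) (hyy : mink n y y = 0) (hxy : mink n x y = 1)
    (hxV : ∀ i ∈ Finset.Icc 1 n, mink n x (V i) = 0)
    (hyV : ∀ i ∈ Finset.Icc 1 n, mink n y (V i) = 0)
    (hVV : ∀ i ∈ Finset.Icc 1 n, ∀ j ∈ Finset.Icc 1 n,
      mink n (V i) (V j) = if i = j then 1 else 0)
    (hW : W = η 1 • x + η (n + 2) • y + ∑ i ∈ Finset.Icc 1 n, η (i + 1) • V i)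
    (hunit : mink n W W = 1)
    (hη2 : η 2 = mink n (V 1) W) (hη2ne : η 2 ≠ 0)
    (h1 : η 1 = H (n + 2) * η 2)
    (hi : ∀ i, 2 ≤ i → i ≤ n + 1 → η i = H i * η 2)
    (hn2 : η (n + 2) = H 1 * η 2)
    (hn1 : η (n + 1) = H (n + 1) * η 2) (hn1ne : η (n + 1) ≠ 0) :
    H (n + 1) ^ 2 / η (n + 1) ^ 2 - 2 * H 1 * H (n + 2)
      = ∑ i ∈ Finset.Icc 1 n, H (i + 1) ^ 2 := by
  have key : mink n W W = 2 * η 1 * η (n + 2) + ∑ i ∈ Finset.Icc 1 n, η (i + 1) ^ 2 := by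
    rw [hW]
    rw [mink_add_left, mink_add_left, mink_add_right, mink_add_right, mink_add_right,
      mink_add_right, mink_add_right, mink_add_right, mink_sum_left, mink_sum_right,
      mink_sum_right]
    simp only [mink_smul_left, mink_smul_right, mink_sum_right, mink_sum_left]
    rw [hxx, hyy, hxy, mink_comm n y x, hxy]
    have A : ∑ i ∈ Finset.Icc 1 n, η (i+1) * (η 1 * mink n x (V i)) = 0 :=
      Finset.sum_eq_zero fun i h => by rw [hxV i h]; ring
    have B : ∑ i ∈ Finset.Icc 1 n, η (i+1) * (η (n+2) * mink n y (V i)) = 0 :=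
      Finset.sum_eq_zero fun i h => by rw [hyV i h]; ring
    have C : ∑ i ∈ Finset.Icc 1 n, η 1 * (η (i+1) * mink n (V i) x) = 0 :=
      Finset.sum_eq_zero fun i h => by rw [mink_comm, hxV i h]; ring
    have D : ∑ i ∈ Finset.Icc 1 n, η (i+1) * mink n (V i) y = 0 :=
      Finset.sum_eq_zero fun i h => by rw [mink_comm, hyV i h]; ring
    have E : ∑ i ∈ Finset.Icc 1 n, η (i+1) * ∑ j ∈ Finset.Icc 1 n, η (j+1) * mink n (V j) (V i)
        = ∑ i ∈ Finset.Icc 1 n, η (i+1) ^ 2 := by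
      refine Finset.sum_congr rfl fun i hi' => ?_
      rw [Finset.sum_eq_single i]
      · rw [hVV i hi' i hi']; simp; ring
      · intro j hj hji; rw [hVV j hj i hi', if_neg hji]; ring
      · intro h; exact absurd hi' h
    rw [A, B, C, D, E]
    simp; ring
  have hsum : 1 = 2 * η 1 * η (n + 2) + ∑ i ∈ Finset.Icc 1 n, η (i + 1) ^ 2 := by
    rw [← hunit, key]
  have hsub : ∀ i ∈ Finset.Icc 1 n, η (i + 1) ^ 2 = H (i + 1) ^ 2 * η 2 ^ 2 := by
    intro i hi'
    simp only [Finset.mem_Icc] at hi'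
    rw [hi (i+1) (by omega) (by omega)]; ring
  rw [Finset.sum_congr rfl hsub, ← Finset.sum_mul] at hsum
  have hHn1 : H (n + 1) ≠ 0 := by
    intro h; apply hn1ne; rw [hn1, h, zero_mul]
  have hdiv : H (n + 1) ^ 2 / η (n + 1) ^ 2 = 1 / η 2 ^ 2 := by
    rw [hn1, mul_pow, div_mul_eq_div_div]
    rw [div_self (pow_ne_zero 2 hHn1)]
  rw [hdiv, h1, hn2] at *
  have hη2sq : η 2 ^ 2 ≠ 0 := pow_ne_zero 2 hη2ne
  field_simp
  nlinarith [hsum]
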